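/- arXiv:2502.18089 — 4 statements merged into one kernel-verified Lean document; each statement's English description precedes it below -/
import Mathlib

section
/- In a plane graph with minimum degree at least 2 in which no 6-cycle has a chord, if a 3-face [v1 v2 u] is adjacent to a 4-face [v1 v2 v3 v4] whose boundary 4-cycle has no chord, then u ∉ {v3, v4}; that is, the two faces are normally adjacent, sharing exactly the edge v1 v2 and exactly the two vertices v1, v2. -/
open SimpleGraph

def HasChorded6Cycle {V : Type*} (G : SimpleGraph V) : Prop :=
  ∃ a b c d e g : V, List.Nodup [a, b, c, d, e, g] ∧
    G.Adj a b ∧ G.Adj b c ∧ G.Adj c d ∧ G.Adj d e ∧ G.Adj e g ∧ G.Adj g a ∧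
    (G.Adj a c ∨ G.Adj b d ∨ G.Adj c e ∨ G.Adj d g ∨ G.Adj e a ∨ G.Adj g b ∨
     G.Adj a d ∨ G.Adj b e ∨ G.Adj c g)

/-- The list of (cyclically) consecutive pairs of a boundary walk. -/
def cyclicPairs {V : Type*} (l : List V) : List (V × V) := l.zip (l.rotate 1)

/-- A combinatorial plane embedding of a graph `G`: faces are given by closed boundary
walks, every edge lies on exactly two boundary-walk positions (counted over all faces,
with multiplicity), and Euler's formula holds. One face is distinguished as the outer
face. -/
structure PlaneEmbedding {V : Type*} (F : Type*) [Fintype V] [DecidableEq V] [Fintype F]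
    (G : SimpleGraph V) [DecidableRel G.Adj] where
  boundary : F → List V
  outer : F
  boundary_ne : ∀ f, boundary f ≠ []
  boundary_walk : ∀ f, ∀ p ∈ cyclicPairs (boundary f), G.Adj p.1 p.2
  edge_twice : ∀ v w : V, G.Adj v w →
    (∑ f, ((cyclicPairs (boundary f)).count (v, w) +
           (cyclicPairs (boundary f)).count (w, v))) = 2
  euler : (Fintype.card V : ℤ) - (G.edgeFinset.card : ℤ) + (Fintype.card F : ℤ) = 2

theorem PlaneEmbedding.adj_of_boundary_eq_triple {V F : Type*} [Fintype V] [DecidableEq V]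
    [Fintype F] {G : SimpleGraph V} [DecidableRel G.Adj] (P : PlaneEmbedding F G) {f : F}
    {a b c : V} (hb : P.boundary f = [a, b, c]) :
    G.Adj a b ∧ G.Adj b c ∧ G.Adj c a := by
  have hwalk := P.boundary_walk f
  rw [hb] at hwalk
  change ∀ p ∈ [(a, b), (b, c), (c, a)], G.Adj p.1 p.2 at hwalk
  exact ⟨hwalk (a, b) (by simp), hwalk (b, c) (by simp), hwalk (c, a) (by simp)⟩

theorem three_face_four_face_normally_adjacent_general {V F : Type*} [Fintype V] [DecidableEq V]
    [Fintype F] (G : SimpleGraph V) [DecidableRel G.Adj] (P : PlaneEmbedding F G)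
    (f3 : F) (v1 v2 v3 v4 u : V)
    (hb3 : P.boundary f3 = [v1, v2, u])
    (hchord1 : ¬ G.Adj v1 v3) (hchord2 : ¬ G.Adj v2 v4) :
    u ≠ v3 ∧ u ≠ v4 := by
  obtain ⟨-, hv2u, huv1⟩ := P.adj_of_boundary_eq_triple hb3
  refine ⟨?_, ?_⟩
  · rintro rfl
    exact hchord1 huv1.symm
  · rintro rfl
    exact hchord2 hv2u

/-- In a plane graph with minimum degree at least 2 and no chorded 6-cycle, if a 3-face
`[v1 v2 u]` is adjacent to a 4-face `[v1 v2 v3 v4]` whose boundary 4-cycle has no chord,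
then `u ∉ {v3, v4}`: the two faces are normally adjacent. -/
theorem three_face_four_face_normally_adjacent {V F : Type*} [Fintype V] [DecidableEq V]
    [Fintype F] (G : SimpleGraph V) [DecidableRel G.Adj] (P : PlaneEmbedding F G)
    (hmin : ∀ v : V, 2 ≤ G.degree v)
    (hc6 : ¬ HasChorded6Cycle G)
    (f3 f4 : F) (hne : f3 ≠ f4) (v1 v2 v3 v4 u : V)
    (hb3 : P.boundary f3 = [v1, v2, u])
    (hb4 : P.boundary f4 = [v1, v2, v3, v4])
    (hnodup : List.Nodup [v1, v2, v3, v4])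
    (hchord1 : ¬ G.Adj v1 v3) (hchord2 : ¬ G.Adj v2 v4) :
    u ≠ v3 ∧ u ≠ v4 :=
  three_face_four_face_normally_adjacent_general G P f3 v1 v2 v3 v4 u hb3 hchord1 hchord2
end

section
/- Let G be a graph with no chorded 6-cycle and no subgraph isomorphic to K_4, containing the configuration C_4: a central vertex u_1 adjacent to four vertices u_2, u_3, u_4, u_5 forming a 4-cycle u_2 u_3 u_4 u_5 u_2 (so u_1 together with the 4-cycle forms a wheel on 5 vertices). If P is a path in G joining u_2 and u_4 that avoids u_1, u_3, u_5, then the length of P is not 1, 2, or 3. -/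
/-!
A path `u2 u4` would make `u1 u2 u3 u4` a `K₄`. A path `u2 x u4` closes the 6-cycle
`u2 x u4 u5 u1 u3` with chord `u1 u2`, and a path `u2 x y u4` closes the 6-cycle
`u2 x y u4 u5 u1` with chord `u1 u4`.
-/

open SimpleGraph

namespace SimpleGraph.Walk

variable {V : Type*} {G : SimpleGraph V} {u v : V}

lemma exists_support_eq_of_length_eq_two (p : G.Walk u v) (h : p.length = 2) :
    ∃ x, G.Adj u x ∧ G.Adj x v ∧ p.support = [u, x, v] := by
  rcases p with _ | ⟨hux, _ | ⟨hxv, _ | ⟨_, _⟩⟩⟩ <;> simp at h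
  exact ⟨_, hux, hxv, rfl⟩

lemma exists_support_eq_of_length_eq_three (p : G.Walk u v) (h : p.length = 3) :
    ∃ x y, G.Adj u x ∧ G.Adj x y ∧ G.Adj y v ∧ p.support = [u, x, y, v] := by
  rcases p with _ | ⟨hux, _ | ⟨hxy, _ | ⟨hyv, _ | ⟨_, _⟩⟩⟩⟩ <;> simp at h
  exact ⟨_, _, hux, hxy, hyv, rfl⟩

end SimpleGraph.Walk

section Wheel

variable {V : Type*} {G : SimpleGraph V} {u1 u2 u3 u4 u5 : V}

theorem hasChorded6Cycle_of_wheel_path_length_two (hnodup : [u1, u2, u3, u4, u5].Nodup)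
    (h12 : G.Adj u1 u2) (h13 : G.Adj u1 u3) (h15 : G.Adj u1 u5) (h23 : G.Adj u2 u3)
    (h45 : G.Adj u4 u5) {p : G.Walk u2 u4} (hp : p.IsPath) (hlen : p.length = 2)
    (h1 : u1 ∉ p.support) (h3 : u3 ∉ p.support) (h5 : u5 ∉ p.support) :
    HasChorded6Cycle G := by
  obtain ⟨x, h2x, hx4, hsupp⟩ := p.exists_support_eq_of_length_eq_two hlen
  have hnd := hp.support_nodup
  rw [hsupp] at hnd h1 h3 h5
  refine ⟨u2, x, u4, u5, u1, u3, ?_, h2x, hx4, h45, h15.symm, h13, h23.symm,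
    .inr <| .inr <| .inr <| .inr <| .inl h12⟩
  simp only [List.nodup_cons, List.mem_cons, List.not_mem_nil] at hnodup hnd h1 h3 h5 ⊢
  grind

theorem hasChorded6Cycle_of_wheel_path_length_three (hnodup : [u1, u2, u3, u4, u5].Nodup)
    (h12 : G.Adj u1 u2) (h14 : G.Adj u1 u4) (h15 : G.Adj u1 u5)
    (h45 : G.Adj u4 u5) {p : G.Walk u2 u4} (hp : p.IsPath) (hlen : p.length = 3)
    (h1 : u1 ∉ p.support) (h5 : u5 ∉ p.support) :
    HasChorded6Cycle G := by
  obtain ⟨x, y, h2x, hxy, hy4, hsupp⟩ := p.exists_support_eq_of_length_eq_three hlen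
  have hnd := hp.support_nodup
  rw [hsupp] at hnd h1 h5
  refine ⟨u2, x, y, u4, u5, u1, ?_, h2x, hxy, hy4, h45, h15.symm, h12,
    .inr <| .inr <| .inr <| .inl h14.symm⟩
  simp only [List.nodup_cons, List.mem_cons, List.not_mem_nil] at hnodup hnd h1 h5 ⊢
  grind

end Wheel

theorem wheel_opposite_rim_path_length_general {V : Type*} (G : SimpleGraph V)
    (hc6 : ¬ HasChorded6Cycle G)
    (hK4 : ¬ ∃ a b c d : V, List.Nodup [a, b, c, d] ∧ G.Adj a b ∧ G.Adj a c ∧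
      G.Adj a d ∧ G.Adj b c ∧ G.Adj b d ∧ G.Adj c d)
    (u1 u2 u3 u4 u5 : V) (hnodup : List.Nodup [u1, u2, u3, u4, u5])
    (h12 : G.Adj u1 u2) (h13 : G.Adj u1 u3) (h14 : G.Adj u1 u4) (h15 : G.Adj u1 u5)
    (h23 : G.Adj u2 u3) (h34 : G.Adj u3 u4) (h45 : G.Adj u4 u5)
    (p : G.Walk u2 u4) (hp : p.IsPath)
    (h1 : u1 ∉ p.support) (h3 : u3 ∉ p.support) (h5 : u5 ∉ p.support) :
    p.length ≠ 1 ∧ p.length ≠ 2 ∧ p.length ≠ 3 := by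
  refine ⟨fun hlen => hK4 ?_, fun hlen => hc6 ?_, fun hlen => hc6 ?_⟩
  · exact ⟨u1, u2, u3, u4, hnodup.sublist (by simp), h12, h13, h14, h23,
      p.adj_of_length_eq_one hlen, h34⟩
  · exact hasChorded6Cycle_of_wheel_path_length_two hnodup h12 h13 h15 h23 h45 hp hlen h1 h3 h5
  · exact hasChorded6Cycle_of_wheel_path_length_three hnodup h12 h14 h15 h45 hp hlen h1 h5

/-- In a graph with no chorded 6-cycle and no `K₄` subgraph containing the wheel `W₅`
(hub `u1`, rim 4-cycle `u2 u3 u4 u5 u2`), any path from `u2` to `u4` avoiding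
`u1, u3, u5` has length different from 1, 2 and 3. -/
theorem wheel_opposite_rim_path_length {V : Type*} (G : SimpleGraph V)
    (hc6 : ¬ HasChorded6Cycle G)
    (hK4 : ¬ ∃ a b c d : V, List.Nodup [a, b, c, d] ∧ G.Adj a b ∧ G.Adj a c ∧
      G.Adj a d ∧ G.Adj b c ∧ G.Adj b d ∧ G.Adj c d)
    (u1 u2 u3 u4 u5 : V) (hnodup : List.Nodup [u1, u2, u3, u4, u5])
    (h12 : G.Adj u1 u2) (h13 : G.Adj u1 u3) (h14 : G.Adj u1 u4) (h15 : G.Adj u1 u5)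
    (h23 : G.Adj u2 u3) (h34 : G.Adj u3 u4) (h45 : G.Adj u4 u5) (h52 : G.Adj u5 u2)
    (p : G.Walk u2 u4) (hp : p.IsPath)
    (h1 : u1 ∉ p.support) (h3 : u3 ∉ p.support) (h5 : u5 ∉ p.support) :
    p.length ≠ 1 ∧ p.length ≠ 2 ∧ p.length ≠ 3 :=
  wheel_opposite_rim_path_length_general G hc6 hK4 u1 u2 u3 u4 u5 hnodup h12 h13 h14 h15 h23 h34 h45
    p hp h1 h3 h5
end

section
/- Let G be a graph with no chorded 6-cycle and no subgraph isomorphic to K_4, containing the wheel configuration C_4: vertex u_1 adjacent to u_2, u_3, u_4, u_5 which form a 4-cycle u_2 u_3 u_4 u_5 u_2. If P is a path in G joining u_2 and u_3 that avoids u_1, u_4, u_5, then the length of P is not 2, 3, or 4. -/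
/-!
Closing a `u2`–`u3` path of length `2`, `3` or `4` through the wheel along
`u3 u4 u1 u5 u2`, `u3 u4 u5 u2` or `u3 u1 u2` respectively gives a 6-cycle, and the rim
edge `u2 u3` is a chord of it.
-/

open SimpleGraph

namespace SimpleGraph.Walk

variable {V : Type*} {G : SimpleGraph V}

theorem IsCycle.hasChorded6Cycle {v : V} {c : G.Walk v v} (hc : c.IsCycle)
    (hlen : c.length = 6) {i j : ℕ} (hij : i + 2 ≤ j) (hji : j ≤ i + 4) (hj : j < 6)
    (hadj : G.Adj (c.getVert i) (c.getVert j)) : HasChorded6Cycle G := by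
  have hrange (m : ℕ) (hm : m ∈ List.range 6) : m ∈ {i | i ≤ c.length - 1} := by
    rw [Set.mem_ofPred_eq, hlen]
    exact Nat.le_pred_of_lt (List.mem_range.1 hm)
  have hnodup : ((List.range 6).map c.getVert).Nodup :=
    List.nodup_range.map_on fun m hm n hn => hc.getVert_injOn' (hrange m hm) (hrange n hn)
  have hstep (n : ℕ) (hn : n < 6) : G.Adj (c.getVert n) (c.getVert (n + 1)) :=
    c.adj_getVert_succ (hlen ▸ hn)
  have hclose : c.getVert 6 = c.getVert 0 := by
    rw [← hlen, getVert_length, getVert_zero]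
  simp only [List.range_succ, List.range_zero, List.nil_append, List.cons_append,
    List.map_cons, List.map_nil] at hnodup
  refine ⟨_, _, _, _, _, _, hnodup, hstep 0 (by norm_num), hstep 1 (by norm_num),
    hstep 2 (by norm_num), hstep 3 (by norm_num), hstep 4 (by norm_num),
    hclose ▸ hstep 5 (by norm_num), ?_⟩
  have hi : i < 4 := by omega
  interval_cases i <;> interval_cases j <;> simp only [hadj, hadj.symm, true_or, or_true]

theorem IsPath.support_tail_disjoint {u v : V} {p : G.Walk u v} (hp : p.IsPath) {l : List V}
    (hl : ∀ w ∈ l, w = u ∨ w ∉ p.support) : p.support.tail.Disjoint l := by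
  have hu : u ∉ p.support.tail :=
    (List.nodup_cons.1 (p.cons_tail_support ▸ hp.support_nodup)).1
  refine List.disjoint_right.2 fun w hwl hwp => ?_
  rcases hl w hwl with rfl | hw
  exacts [hu hwp, hw (List.mem_of_mem_tail hwp)]

theorem IsPath.hasChorded6Cycle_append {u v : V} {p : G.Walk u v} {q : G.Walk v u}
    (hp : p.IsPath) (hq : q.IsPath) (hdisj : p.support.tail.Disjoint q.support.tail)
    (hlen : p.length + q.length = 6) (hp2 : 2 ≤ p.length) (hq2 : 2 ≤ q.length)
    (huv : G.Adj u v) : HasChorded6Cycle G := by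
  refine (hp.isCycle_append hq hdisj (by omega)).hasChorded6Cycle (i := 0) (j := p.length)
    (by simpa using hlen) hp2 (by omega) (by omega) ?_
  simpa [getVert_append'] using huv

end SimpleGraph.Walk

theorem wheel_adjacent_rim_path_length_general {V : Type*} (G : SimpleGraph V)
    (hc6 : ¬ HasChorded6Cycle G)
    (u1 u2 u3 u4 u5 : V) (hnodup : List.Nodup [u1, u2, u3, u4, u5])
    (h12 : G.Adj u1 u2) (h13 : G.Adj u1 u3) (h14 : G.Adj u1 u4) (h15 : G.Adj u1 u5)
    (h23 : G.Adj u2 u3) (h34 : G.Adj u3 u4) (h45 : G.Adj u4 u5) (h52 : G.Adj u5 u2)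
    (p : G.Walk u2 u3) (hp : p.IsPath)
    (h1 : u1 ∉ p.support) (h4 : u4 ∉ p.support) (h5 : u5 ∉ p.support) :
    p.length ≠ 2 ∧ p.length ≠ 3 ∧ p.length ≠ 4 := by
  have closes (q : G.Walk u3 u2) (hq : q.IsPath)
      (hqp : ∀ w ∈ q.support.tail, w = u2 ∨ w ∉ p.support) (hlen : p.length + q.length = 6)
      (hp2 : 2 ≤ p.length) (hq2 : 2 ≤ q.length) : False :=
    hc6 (hp.hasChorded6Cycle_append hq (hp.support_tail_disjoint hqp) hlen hp2 hq2 h23)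
  simp only [List.nodup_cons, List.mem_cons, List.not_mem_nil, or_false, List.nodup_nil,
    and_true, not_or] at hnodup
  refine ⟨fun hlen => closes (.cons h34 (.cons h14.symm (.cons h15 (.cons h52 .nil))))
      ?_ ?_ ?_ ?_ ?_,
    fun hlen => closes (.cons h34 (.cons h45 (.cons h52 .nil))) ?_ ?_ ?_ ?_ ?_,
    fun hlen => closes (.cons h13.symm (.cons h12 .nil)) ?_ ?_ ?_ ?_ ?_⟩
  all_goals first
    | omega
    | simp only [Walk.length_cons, Walk.length_nil]; omega
    | (simp [h1, h4, h5]; done)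
    | simp only [Walk.cons_isPath_iff, Walk.IsPath.nil, true_and, Walk.support_cons,
        Walk.support_nil, List.mem_cons, List.not_mem_nil]; grind

/-- In a graph with no chorded 6-cycle and no `K₄` subgraph containing the wheel `W₅`
(hub `u1`, rim 4-cycle `u2 u3 u4 u5 u2`), any path from `u2` to `u3` avoiding
`u1, u4, u5` has length different from 2, 3 and 4. -/
theorem wheel_adjacent_rim_path_length {V : Type*} (G : SimpleGraph V)
    (hc6 : ¬ HasChorded6Cycle G)
    (hK4 : ¬ ∃ a b c d : V, List.Nodup [a, b, c, d] ∧ G.Adj a b ∧ G.Adj a c ∧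
      G.Adj a d ∧ G.Adj b c ∧ G.Adj b d ∧ G.Adj c d)
    (u1 u2 u3 u4 u5 : V) (hnodup : List.Nodup [u1, u2, u3, u4, u5])
    (h12 : G.Adj u1 u2) (h13 : G.Adj u1 u3) (h14 : G.Adj u1 u4) (h15 : G.Adj u1 u5)
    (h23 : G.Adj u2 u3) (h34 : G.Adj u3 u4) (h45 : G.Adj u4 u5) (h52 : G.Adj u5 u2)
    (p : G.Walk u2 u3) (hp : p.IsPath)
    (h1 : u1 ∉ p.support) (h4 : u4 ∉ p.support) (h5 : u5 ∉ p.support) :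
    p.length ≠ 2 ∧ p.length ≠ 3 ∧ p.length ≠ 4 :=
  wheel_adjacent_rim_path_length_general G hc6 u1 u2 u3 u4 u5 hnodup h12 h13 h14 h15 h23 h34 h45 h52
    p hp h1 h4 h5
end

section
/- Let H be a cover of a graph G and f : V(H) → {0,1,2} with Σ_{x∈L_v} f(x) ≥ 4 for every v ∈ V(G). If v is a vertex of G with degree at most 3 and T' is a strictly f-degenerate transversal of H − L_v (the cover restricted to G − v), then T' extends to a strictly f-degenerate transversal of H. -/
open SimpleGraph

/-- A cover (in the sense of DP-coloring) of a graph `G` with lists `L_v = {v} × [s]`: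
edges only join lists of adjacent vertices, and between two lists they form a matching. -/
structure DPCover {V : Type*} (G : SimpleGraph V) (s : ℕ) where
  H : SimpleGraph (V × Fin s)
  adj_of : ∀ x y : V × Fin s, H.Adj x y → G.Adj x.1 y.1
  matching : ∀ x y y' : V × Fin s, H.Adj x y → H.Adj x y' → y.1 = y'.1 → y = y'

/-- `T` is a transversal of the cover restricted to the vertex set `A`. -/
def IsTransversal {V : Type*} {s : ℕ} (T : Set (V × Fin s)) (A : Set V) : Prop :=
  (∀ x ∈ T, x.1 ∈ A) ∧ ∀ v ∈ A, ∃! i : Fin s, (v, i) ∈ T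

/-- `T` is strictly `f`-degenerate: every nonempty subset of `T` contains a vertex whose
degree inside that subset (w.r.t. the cover graph `H`) is less than its `f`-value. -/
def StrictlyDegenerate {V : Type*} {s : ℕ} (H : SimpleGraph (V × Fin s))
    (f : V × Fin s → ℕ) (T : Set (V × Fin s)) : Prop :=
  ∀ S : Set (V × Fin s), S ⊆ T → S.Nonempty →
    ∃ x ∈ S, ({y ∈ S | H.Adj x y}).ncard < f x

/-- If `f : V(H) → {0,1,2}` with `Σ_{x ∈ L_v} f(x) ≥ 4` for all `v`, and `v` has degree
at most 3 in `G`, then any strictly `f`-degenerate transversal of `H - L_v` extends to a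
strictly `f`-degenerate transversal of `H`. -/
theorem extend_over_low_degree_vertex {V : Type*} [Fintype V] [DecidableEq V] {s : ℕ}
    (G : SimpleGraph V) [DecidableRel G.Adj] (C : DPCover G s)
    (f : V × Fin s → ℕ) (hf2 : ∀ x, f x ≤ 2)
    (hf4 : ∀ v : V, 4 ≤ ∑ i : Fin s, f (v, i))
    (v : V) (hdeg : G.degree v ≤ 3)
    (T' : Set (V × Fin s)) (hT' : IsTransversal T' {w : V | w ≠ v})
    (hd : StrictlyDegenerate C.H f T') :
    ∃ i : Fin s, IsTransversal (insert (v, i) T') Set.univ ∧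
      StrictlyDegenerate C.H f (insert (v, i) T') := by
    classical
  have hinj : ∀ y ∈ T', ∀ y' ∈ T', y.1 = y'.1 → y = y' := by
    intro y hy y' hy' h1
    obtain ⟨j, hj, hu⟩ := hT'.2 y.1 (hT'.1 y hy)
    have h2 : y.2 = j := hu y.2 (by simpa using hy)
    have h3 : y'.2 = j := hu y'.2 (by rw [h1]; simpa using hy')
    exact Prod.ext h1 (h2.trans h3.symm)
  obtain ⟨i, hi⟩ : ∃ i : Fin s, ({y ∈ T' | C.H.Adj (v, i) y}).ncard < f (v, i) := by
    by_contra hc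
    push_neg at hc
    have hsum : 4 ≤ ∑ i : Fin s, ({y ∈ T' | C.H.Adj (v, i) y}).ncard :=
      le_trans (hf4 v) (Finset.sum_le_sum fun i _ => hc i)
    set B : Fin s → Finset (V × Fin s) := fun i =>
      (Set.toFinite {y ∈ T' | C.H.Adj (v, i) y}).toFinset with hB
    have hcard : ∀ i : Fin s, ({y ∈ T' | C.H.Adj (v, i) y}).ncard = (B i).card := fun i =>
      Set.ncard_eq_toFinset_card _ _
    have hdisj : ∀ i ∈ (Finset.univ : Finset (Fin s)), ∀ j ∈ (Finset.univ : Finset (Fin s)),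
        i ≠ j → Disjoint (B i) (B j) := by
      intro i _ j _ hij
      rw [Finset.disjoint_left]
      intro y hyi hyj
      rw [hB, Set.Finite.mem_toFinset] at hyi hyj
      have := C.matching y (v, i) (v, j) hyi.2.symm hyj.2.symm rfl
      exact hij (by simpa using congrArg Prod.snd this)
    have hsum2 : ∑ i : Fin s, (B i).card = (Finset.univ.biUnion B).card :=
      (Finset.card_biUnion hdisj).symm
    have hsub : (Finset.univ.biUnion B).card ≤ G.degree v := by
      rw [← SimpleGraph.card_neighborFinset_eq_degree]
      apply Finset.card_le_card_of_injOn (fun y => y.1)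
      · intro y hy
        rw [Finset.mem_coe, Finset.mem_biUnion] at hy
        obtain ⟨k, _, hk⟩ := hy
        rw [hB, Set.Finite.mem_toFinset] at hk
        simpa using C.adj_of _ _ hk.2
      · intro y hy y' hy' h
        rw [Finset.mem_coe, Finset.mem_biUnion] at hy hy'
        obtain ⟨k, _, hk⟩ := hy
        obtain ⟨k', _, hk'⟩ := hy'
        rw [hB, Set.Finite.mem_toFinset] at hk hk'
        exact hinj y hk.1 y' hk'.1 h
    simp only [hcard] at hsum
    omega
  refine ⟨i, ⟨fun x _ => Set.mem_univ _, ?_⟩, ?_⟩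
  · intro w _
    by_cases hw : w = v
    · subst hw
      refine ⟨i, Set.mem_insert _ _, ?_⟩
      intro j hj
      rcases hj with hj | hj
      · simpa using congrArg Prod.snd hj
      · exact absurd (hT'.1 _ hj) (by simp)
    · obtain ⟨j, hj, hu⟩ := hT'.2 w hw
      refine ⟨j, Set.mem_insert_of_mem _ hj, ?_⟩
      intro k hk
      rcases hk with hk | hk
      · exact absurd (congrArg Prod.fst hk) hw
      · exact hu k hk
  · intro S hS hne
    by_cases hvS : (v, i) ∈ S
    · refine ⟨(v, i), hvS, lt_of_le_of_lt (Set.ncard_le_ncard ?_ (Set.toFinite _)) hi⟩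
      intro y hy
      obtain ⟨hyS, hadj⟩ := hy
      refine ⟨?_, hadj⟩
      rcases hS hyS with h | h
      · exact absurd hadj (by rw [h]; exact C.H.loopless.irrefl _)
      · exact h
    · refine hd S ?_ hne
      intro y hy
      rcases hS hy with h | h
      · exact absurd h (fun h => hvS (h ▸ hy))
      · exact h
end
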